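/- Let Γ be a connected graph and suppose its vertex set is partitioned as D ⊔ P where every edge joins D to P (Γ is bipartite). Suppose there is a distinguished vertex d₀ ∈ D such that every vertex of P is adjacent to d₀, and the neighborhoods of vertices in P pairwise intersect only in {d₀}. If at least two vertices of P have a neighbor other than d₀, then d₀ is a cut vertex of Γ. -/
import Mathlib


/-- If `Γ` is connected and bipartite with parts `D` and `P`, every vertex of `P`
is adjacent to `d₀ ∈ D`, the neighborhoods of distinct vertices of `P` intersect
only in `{d₀}`, and at least two vertices of `P` have a neighbor other than `d₀`,
then `d₀` is a cut vertex of `Γ`. -/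
theorem stmt9 {V : Type*} (Γ : SimpleGraph V) (hconn : Γ.Connected)
    (D P : Set V) (hpart : D ∪ P = Set.univ) (hdisj : Disjoint D P)
    (hbip : ∀ u v : V, Γ.Adj u v → (u ∈ D ∧ v ∈ P) ∨ (u ∈ P ∧ v ∈ D))
    (d₀ : V) (hd₀ : d₀ ∈ D)
    (hadj : ∀ p ∈ P, Γ.Adj p d₀)
    (hnbhd : ∀ p ∈ P, ∀ p' ∈ P, p ≠ p' →
      Γ.neighborSet p ∩ Γ.neighborSet p' ⊆ {d₀})
    (htwo : ∃ p ∈ P, ∃ p' ∈ P, p ≠ p' ∧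
      (∃ d, d ≠ d₀ ∧ Γ.Adj p d) ∧ (∃ d, d ≠ d₀ ∧ Γ.Adj p' d)) :
    ¬ (Γ.induce {v | v ≠ d₀}).Connected := by
  obtain ⟨p, hp, p', hp', hne, _, _⟩ := htwo
  have hPD : ∀ x ∈ P, x ∉ D := fun x hx hxD => hdisj.ne_of_mem hxD hx rfl
  have hpd : p ≠ d₀ := fun h => hPD p hp (h ▸ hd₀)
  have hp'd : p' ≠ d₀ := fun h => hPD p' hp' (h ▸ hd₀)
  -- S = {p} ∪ (N(p) \ {d₀}) is closed under adjacency in the punctured graph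
  set S : Set V := {p} ∪ (Γ.neighborSet p \ {d₀}) with hS
  have hclosed : ∀ u v : V, u ∈ S → v ≠ d₀ → Γ.Adj u v → v ∈ S := by
    intro u v hu hv huv
    rcases hu with hu | ⟨hun, hud⟩
    · simp only [Set.mem_singleton_iff] at hu
      subst hu
      exact Or.inr ⟨huv, hv⟩
    · -- u ∈ N(p), u ≠ d₀, so u ∈ D; v adjacent to u so v ∈ P; then v = p
      have huD : u ∈ D := by
        rcases hbip p u hun with ⟨h1, _⟩ | ⟨_, h2⟩
        · exact absurd h1 (hPD p hp)
        · exact h2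
      have hvP : v ∈ P := by
        rcases hbip u v huv with ⟨_, h2⟩ | ⟨h1, _⟩
        · exact h2
        · exact absurd huD (hPD u h1)
      by_cases hvp : v = p
      · exact Or.inl (by simp [hvp])
      · have : u ∈ Γ.neighborSet v ∩ Γ.neighborSet p :=
          ⟨huv.symm, hun⟩
        have := hnbhd v hvP p hp hvp this
        exact absurd this hud
  have hpS : p ∈ S := Or.inl rfl
  have hp'S : p' ∉ S := by
    intro h
    rcases h with h | ⟨hn, _⟩
    · exact hne (Set.mem_singleton_iff.mp h).symm
    · rcases hbip p p' hn with ⟨h1, _⟩ | ⟨_, h2⟩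
      · exact hPD p hp h1
      · exact hPD p' hp' h2
  intro hc
  have hr := hc.preconnected ⟨p, hpd⟩ ⟨p', hp'd⟩
  obtain ⟨w⟩ := hr
  have key : ∀ (a b : {v | v ≠ d₀}) (w : (Γ.induce {v | v ≠ d₀}).Walk a b),
      (a : V) ∈ S → (b : V) ∈ S := by
    intro a b w
    induction w with
    | nil => exact id
    | @cons a c b h _ ih =>
      intro ha
      exact ih (hclosed a.1 c.1 ha c.2 h)
  exact hp'S (key _ _ w hpS)
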